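/- For every λ ∈ ℂ with λ ≠ 0, λ ≠ 1 and λ ≠ −1, setting μ = (1+λ)/(1−λ) one has (32 + 49λ² + 27λ⁴)/(36·λ²·(λ²−1)²) = (2/(1−λ)²)²·(27 + 5μ + 64μ² + 5μ³ + 27μ⁴)/(36·μ²·(μ²−1)²). -/

import Mathlib

/-! Under the Cayley map `μ = (1 + λ)/(1 - λ)` one has `μ² - 1 = 4λ/(1 - λ)²`, and the quartic
numerator of the No. 11 invariant pulls back to `4 (32 + 49λ² + 27λ⁴)/(1 - λ)⁴`, four times the
numerator of the No. 9 invariant. Substituting both, the powers of `1 - λ` cancel against the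
squared derivative `(2/(1 - λ)²)²`. -/

section Cayley

variable {K : Type*} [Field K] {l m : K}

theorem cayley_sq_sub_one (hl : 1 - l ≠ 0) (hm : m = (1 + l) / (1 - l)) :
    m ^ 2 - 1 = 4 * l / (1 - l) ^ 2 := by
  subst hm
  field_simp
  ring

theorem cayley_pullback_no11_numerator (hl : 1 - l ≠ 0) (hm : m = (1 + l) / (1 - l)) :
    27 + 5 * m + 64 * m ^ 2 + 5 * m ^ 3 + 27 * m ^ 4
      = 4 * (32 + 49 * l ^ 2 + 27 * l ^ 4) / (1 - l) ^ 4 := by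
  subst hm
  field_simp
  ring

end Cayley

theorem sigma_match_no9_no11 (l : ℂ) (h1 : l ≠ 1) (h2 : l ≠ -1)
    (m : ℂ) (hm : m = (1 + l) / (1 - l)) :
    (32 + 49 * l ^ 2 + 27 * l ^ 4) / (36 * l ^ 2 * (l ^ 2 - 1) ^ 2)
      = (2 / (1 - l) ^ 2) ^ 2
          * (27 + 5 * m + 64 * m ^ 2 + 5 * m ^ 3 + 27 * m ^ 4)
        / (36 * m ^ 2 * (m ^ 2 - 1) ^ 2) := by
  have hsub : 1 - l ≠ 0 := sub_ne_zero.mpr (Ne.symm h1)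
  have hadd : 1 + l ≠ 0 := fun h => h2 (eq_neg_of_add_eq_zero_right h)
  have hsq : l ^ 2 - 1 ≠ 0 := by
    rw [show l ^ 2 - 1 = -((1 - l) * (1 + l)) by ring]
    exact neg_ne_zero.mpr (mul_ne_zero hsub hadd)
  rw [cayley_pullback_no11_numerator hsub hm, cayley_sq_sub_one hsub hm, hm]
  field_simp
  ring
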